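/- For each 1 ≤ i ≤ n, define k(i) as the smallest k ∈ [i,n] such that d_P(i,k) > d_P(1,i), with k(i) = n+1 if no such k exists; and if k(i) ≤ n define j(i) as the largest j ∈ [k(i),n] such that d_P(k(i),j) ≤ d_P(j,n) (it exists since j = k(i) qualifies), with j(i) = n+1 if k(i) = n+1. Then for each 1 ≤ i ≤ n−1, k(i) ≤ k(i+1) and j(i) ≤ j(i+1). -/
import Mathlib


/-- Path distance along the path: `d_P(i,j) = Σ_{k=i}^{j-1} dist(v_k, v_{k+1})`. -/
noncomputable def dP {X : Type*} [MetricSpace X] (v : ℕ → X) (i j : ℕ) : ℝ :=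
  ∑ k ∈ Finset.Ico i j, dist (v k) (v (k + 1))

lemma dP_nonneg {X : Type*} [MetricSpace X] (v : ℕ → X) (i j : ℕ) : 0 ≤ dP v i j :=
  Finset.sum_nonneg fun _ _ => dist_nonneg

lemma dP_add {X : Type*} [MetricSpace X] (v : ℕ → X) {a b c : ℕ} (h1 : a ≤ b) (h2 : b ≤ c) :
    dP v a c = dP v a b + dP v b c :=
  (Finset.sum_Ico_consecutive _ h1 h2).symm

lemma dP_mono_left {X : Type*} [MetricSpace X] (v : ℕ → X) {a b c : ℕ} (h1 : a ≤ b) (h2 : b ≤ c) :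
    dP v b c ≤ dP v a c := by
  rw [dP_add v h1 h2]
  linarith [dP_nonneg v a b]

lemma dP_mono_right {X : Type*} [MetricSpace X] (v : ℕ → X) {a b c : ℕ} (h1 : a ≤ b) (h2 : b ≤ c) :
    dP v a b ≤ dP v a c := by
  rw [dP_add v h1 h2]
  linarith [dP_nonneg v b c]

/-- For each `1 ≤ i ≤ n`, define `k(i)` as the smallest `k ∈ [i,n]` with
`d_P(i,k) > d_P(1,i)`, with `k(i) = n+1` if no such `k` exists; and if
`k(i) ≤ n`, define `j(i)` as the largest `j ∈ [k(i),n]` with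
`d_P(k(i),j) ≤ d_P(j,n)`, with `j(i) = n+1` if `k(i) = n+1`. Then for each
`1 ≤ i ≤ n−1`, `k(i) ≤ k(i+1)` and `j(i) ≤ j(i+1)`. -/
theorem stmt13 {X : Type*} [MetricSpace X] (n : ℕ) (hn : 1 ≤ n) (v : ℕ → X)
    (hv : Set.InjOn v (Set.Icc 1 n))
    (kf jf : ℕ → ℕ)
    (hkf : ∀ i, 1 ≤ i → i ≤ n →
      (kf i ∈ Finset.Icc i n ∧ dP v 1 i < dP v i (kf i) ∧
        ∀ k ∈ Finset.Icc i n, dP v 1 i < dP v i k → kf i ≤ k) ∨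
      (kf i = n + 1 ∧ ∀ k ∈ Finset.Icc i n, ¬ dP v 1 i < dP v i k))
    (hjf : ∀ i, 1 ≤ i → i ≤ n →
      (kf i ≤ n →
        jf i ∈ Finset.Icc (kf i) n ∧ dP v (kf i) (jf i) ≤ dP v (jf i) n ∧
          ∀ j ∈ Finset.Icc (kf i) n, dP v (kf i) j ≤ dP v j n → j ≤ jf i) ∧
      (kf i = n + 1 → jf i = n + 1)) :
    ∀ i, 1 ≤ i → i + 1 ≤ n → kf i ≤ kf (i + 1) ∧ jf i ≤ jf (i + 1) := by
  intro i hi1 hin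
  have hi_le : i ≤ n := le_trans (Nat.le_succ i) hin
  have hi1' : 1 ≤ i + 1 := le_trans hi1 (Nat.le_succ i)
  -- kf i ≤ n + 1 always
  have hkfi_le : kf i ≤ n + 1 := by
    rcases hkf i hi1 hi_le with ⟨hmem, _, _⟩ | ⟨heq, _⟩
    · exact le_trans (Finset.mem_Icc.mp hmem).2 (Nat.le_succ n)
    · exact le_of_eq heq
  -- key: kf i ≤ kf (i+1)
  have hk : kf i ≤ kf (i + 1) := by
    rcases hkf (i + 1) hi1' hin with ⟨hmem', hlt', _⟩ | ⟨heq', _⟩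
    · -- kf (i+1) ∈ [i+1, n], dP 1 (i+1) < dP (i+1) (kf (i+1))
      obtain ⟨hlo, hhi⟩ := Finset.mem_Icc.mp hmem'
      -- dP 1 i ≤ dP 1 (i+1) and dP (i+1) (kf (i+1)) ≤ dP i (kf (i+1))
      have h1 : dP v 1 i ≤ dP v 1 (i + 1) := dP_mono_right v hi1 (Nat.le_succ i)
      have h2 : dP v (i + 1) (kf (i + 1)) ≤ dP v i (kf (i + 1)) :=
        dP_mono_left v (Nat.le_succ i) hlo
      have hcand : dP v 1 i < dP v i (kf (i + 1)) := by linarith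
      rcases hkf i hi1 hi_le with ⟨_, _, hmin⟩ | ⟨_, hnone⟩
      · exact hmin _ (Finset.mem_Icc.mpr ⟨le_trans (Nat.le_succ i) hlo, hhi⟩) hcand
      · exact absurd hcand
          (hnone _ (Finset.mem_Icc.mpr ⟨le_trans (Nat.le_succ i) hlo, hhi⟩))
    · rw [heq']; exact hkfi_le
  refine ⟨hk, ?_⟩
  -- jf monotone
  by_cases hcase : kf (i + 1) ≤ n
  · have hkfi : kf i ≤ n := le_trans hk hcase
    obtain ⟨hjmem, hjle, _⟩ := (hjf i hi1 hi_le).1 hkfi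
    obtain ⟨hjmem', _, hjmax'⟩ := (hjf (i + 1) hi1' hin).1 hcase
    obtain ⟨hjlo, hjhi⟩ := Finset.mem_Icc.mp hjmem
    obtain ⟨hjlo', _⟩ := Finset.mem_Icc.mp hjmem'
    by_cases hcmp : kf (i + 1) ≤ jf i
    · -- jf i qualifies for the max defining jf (i+1)
      have hle : dP v (kf (i + 1)) (jf i) ≤ dP v (jf i) n :=
        le_trans (dP_mono_left v hk hcmp) hjle
      exact hjmax' _ (Finset.mem_Icc.mpr ⟨hcmp, hjhi⟩) hle
    · exact le_trans (le_of_not_ge hcmp) hjlo'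
  · -- kf (i+1) = n + 1, so jf (i+1) = n + 1
    have heq' : kf (i + 1) = n + 1 := by
      rcases hkf (i + 1) hi1' hin with ⟨hmem', _, _⟩ | ⟨heq', _⟩
      · exact absurd (Finset.mem_Icc.mp hmem').2 hcase
      · exact heq'
    have hj' : jf (i + 1) = n + 1 := (hjf (i + 1) hi1' hin).2 heq'
    rw [hj']
    by_cases hkfi : kf i ≤ n
    · obtain ⟨hjmem, _, _⟩ := (hjf i hi1 hi_le).1 hkfi
      exact le_trans (Finset.mem_Icc.mp hjmem).2 (Nat.le_succ n)
    · have : kf i = n + 1 := by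
        rcases hkf i hi1 hi_le with ⟨hmem, _, _⟩ | ⟨heq, _⟩
        · exact absurd (Finset.mem_Icc.mp hmem).2 hkfi
        · exact heq
      exact le_of_eq ((hjf i hi1 hi_le).2 this)
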